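/- arXiv:math/0305421 — 2 statements merged into one kernel-verified Lean document; each statement's English description precedes it below -/
import Mathlib

section
/- Let a and b be positive integers with b ≥ 4 and a ≡ 3 (mod b). Then D_2(a;b) = 5·⌊b/3⌋² if b ≡ 0 or 1 (mod 3), and D_2(a;b) = 5·⌊b/3⌋² + 4·⌊b/3⌋ + 1 if b ≡ 2 (mod 3). -/
/-- `f_{a;b}(j)`: the number of `m ∈ {0,…,a-1}` with `⌊m·b/a⌋ = j`. -/
def freq (a b j : ℕ) : ℕ := ((Finset.range a).filter (fun m => m * b / a = j)).card

lemma ceil_le_iff (b n m : ℕ) (hb : 0 < b) : (n + b - 1)/b ≤ m ↔ n ≤ b*m := by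
  rw [Nat.div_le_iff_le_mul_add_pred hb]
  omega

lemma freq_eq (a b j : ℕ) (ha : 0 < a) (hb : 0 < b) (hj : j + 1 ≤ b) :
    freq a b j = ((j+1)*a + b - 1)/b - (j*a + b - 1)/b := by
  have hfilter : (Finset.range a).filter (fun m => m * b / a = j)
      = Finset.Ico ((j*a + b - 1)/b) (((j+1)*a + b - 1)/b) := by
    ext m
    simp only [Finset.mem_filter, Finset.mem_range, Finset.mem_Ico]
    have h1 : (j*a + b - 1)/b ≤ m ↔ j*a ≤ m*b := by
      rw [ceil_le_iff _ _ _ hb, mul_comm b m]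
    have h2 : ((j+1)*a + b - 1)/b ≤ m ↔ (j+1)*a ≤ m*b := by
      rw [ceil_le_iff _ _ _ hb, mul_comm b m]
    have hU : ((j+1)*a + b - 1)/b ≤ a := by
      rw [ceil_le_iff _ _ _ hb]
      exact Nat.mul_le_mul_right a hj
    have h3 : m*b/a = j ↔ (j*a ≤ m*b ∧ m*b < (j+1)*a) := by
      constructor
      · rintro rfl
        exact ⟨Nat.div_mul_le_self _ _, (Nat.div_lt_iff_lt_mul ha).1 (Nat.lt_succ_self _)⟩
      · rintro ⟨l, u⟩
        have u1 : j ≤ m*b/a := (Nat.le_div_iff_mul_le ha).2 l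
        have u2 : m*b/a < j+1 := (Nat.div_lt_iff_lt_mul ha).2 u
        omega
    constructor
    · rintro ⟨hma, hdiv⟩
      rw [h3] at hdiv
      refine ⟨h1.2 hdiv.1, ?_⟩
      by_contra hc
      exact absurd (h2.1 (le_of_not_gt hc)) (not_le.2 hdiv.2)
    · rintro ⟨hl, hu⟩
      refine ⟨lt_of_lt_of_le hu hU, h3.2 ⟨h1.1 hl, ?_⟩⟩
      by_contra hc
      exact absurd (h2.2 (le_of_not_gt hc)) (not_le.2 hu)
  rw [freq, hfilter, Nat.card_Ico]

lemma freq_split (a b q j : ℕ) (hb : 0 < b) (ha : a = b*q + 3) (hj : j + 1 ≤ b) :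
    freq a b j = q + ((3*(j+1) + b - 1)/b - (3*j + b - 1)/b) := by
  have ha0 : 0 < a := by omega
  rw [freq_eq a b j ha0 hb hj]
  have key : ∀ n : ℕ, (n*a + b - 1)/b = n*q + (3*n + b - 1)/b := by
    intro n
    have e1 : n*a = 3*n + n*q*b := by subst ha; ring
    have e : n*a + b - 1 = (3*n + b - 1) + n*q*b := by omega
    rw [e, Nat.add_mul_div_right _ _ hb]
    omega
  rw [key (j+1), key j]
  have mono : (3*j + b - 1)/b ≤ (3*(j+1) + b - 1)/b := Nat.div_le_div_right (by omega)
  have e2 : (j+1)*q = j*q + q := by ring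
  omega

lemma cc_eq (b j k : ℕ) (hb : 0 < b) (h1 : 3*j ≤ b*k) (h2 : b*k < 3*j + b) :
    (3*j + b - 1)/b = k := by
  apply Nat.div_eq_of_lt_le
  · rw [mul_comm k b]; omega
  · rw [add_mul, one_mul, mul_comm k b]; omega

lemma c_formula01 (b t j : ℕ) (hbt : b = 3*t ∨ b = 3*t+1) (ht : 1 ≤ t)
    (hj1 : 1 ≤ j) (hj2 : j ≤ b) :
    (3*j + b - 1)/b = if j ≤ t then 1 else if j ≤ 2*t then 2 else 3 := by
  have hb : 0 < b := by omega
  split_ifs <;> apply cc_eq _ _ _ hb <;> omega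

lemma c_formula2 (b t j : ℕ) (hbt : b = 3*t+2) (ht : 1 ≤ t)
    (hj1 : 1 ≤ j) (hj2 : j ≤ b) :
    (3*j + b - 1)/b = if j ≤ t then 1 else if j ≤ 2*t+1 then 2 else 3 := by
  have hb : 0 < b := by omega
  split_ifs <;> apply cc_eq _ _ _ hb <;> omega

theorem D2_of_three_mod (a b : ℕ) (ha : 0 < a) (hb : 4 ≤ b) (h : a % b = 3) :
    ((b % 3 = 0 ∨ b % 3 = 1) →
      (∑ j ∈ Finset.Icc 1 (b - 1), (j : ℤ) ^ 2 * ((freq a b j : ℤ) - ((a / b : ℕ) : ℤ)))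
        = 5 * ((b / 3 : ℕ) : ℤ) ^ 2)
    ∧ (b % 3 = 2 →
      (∑ j ∈ Finset.Icc 1 (b - 1), (j : ℤ) ^ 2 * ((freq a b j : ℤ) - ((a / b : ℕ) : ℤ)))
        = 5 * ((b / 3 : ℕ) : ℤ) ^ 2 + 4 * ((b / 3 : ℕ) : ℤ) + 1) := by
  have hb0 : 0 < b := by omega
  set q := a / b with hq
  set t := b / 3 with htdef
  have haeq : a = b*q + 3 := by
    have h2 := Nat.div_add_mod a b
    rw [← hq] at h2
    omega
  have ht1 : 1 ≤ t := by omega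
  constructor
  · intro hcase
    have hbt : b = 3*t ∨ b = 3*t+1 := by omega
    have hj2ne : t ≠ 2*t := by omega
    have hpt : ∀ j ∈ Finset.Icc 1 (b-1), (j : ℤ) ^ 2 * ((freq a b j : ℤ) - (q : ℤ))
        = (if j = t then (j:ℤ)^2 else 0) + (if j = 2*t then (j:ℤ)^2 else 0) := by
      intro j hj
      rw [Finset.mem_Icc] at hj
      rw [freq_split a b q j hb0 haeq (by omega)]
      rw [c_formula01 b t (j+1) hbt ht1 (by omega) (by omega),
          c_formula01 b t j hbt ht1 (by omega) (by omega)]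
      by_cases h1 : j = t
      · subst h1
        simp only [if_pos rfl, if_neg hj2ne]
        rw [if_neg (by omega), if_pos (le_refl t), if_pos (by omega)]
        push_cast
        ring
      · by_cases h2 : j = 2*t
        · subst h2
          rw [if_neg h1, if_pos rfl, if_neg (by omega), if_neg (by omega),
              if_neg (by omega), if_pos (le_refl (2*t))]
          push_cast
          ring
        · rw [if_neg h1, if_neg h2]
          have : (if j+1 ≤ t then 1 else if j+1 ≤ 2*t then 2 else 3)
              - (if j ≤ t then 1 else if j ≤ 2*t then 2 else 3) = 0 := by
            split_ifs <;> omega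
          rw [this]
          push_cast
          ring
    rw [Finset.sum_congr rfl hpt, Finset.sum_add_distrib,
        Finset.sum_ite_eq' _ t (fun j => (j:ℤ)^2),
        Finset.sum_ite_eq' _ (2*t) (fun j => (j:ℤ)^2),
        if_pos (Finset.mem_Icc.2 (by omega)), if_pos (Finset.mem_Icc.2 (by omega))]
    push_cast
    ring
  · intro hcase
    have hbt : b = 3*t+2 := by omega
    have hj2ne : t ≠ 2*t+1 := by omega
    have hpt : ∀ j ∈ Finset.Icc 1 (b-1), (j : ℤ) ^ 2 * ((freq a b j : ℤ) - (q : ℤ))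
        = (if j = t then (j:ℤ)^2 else 0) + (if j = 2*t+1 then (j:ℤ)^2 else 0) := by
      intro j hj
      rw [Finset.mem_Icc] at hj
      rw [freq_split a b q j hb0 haeq (by omega)]
      rw [c_formula2 b t (j+1) hbt ht1 (by omega) (by omega),
          c_formula2 b t j hbt ht1 (by omega) (by omega)]
      by_cases h1 : j = t
      · subst h1
        simp only [if_pos rfl, if_neg hj2ne]
        rw [if_neg (by omega), if_pos (le_refl t), if_pos (by omega)]
        push_cast
        ring
      · by_cases h2 : j = 2*t+1
        · subst h2
          rw [if_neg h1, if_pos rfl, if_neg (by omega), if_neg (by omega),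
              if_neg (by omega), if_pos (le_refl (2*t+1))]
          push_cast
          ring
        · rw [if_neg h1, if_neg h2]
          have : (if j+1 ≤ t then 1 else if j+1 ≤ 2*t+1 then 2 else 3)
              - (if j ≤ t then 1 else if j ≤ 2*t+1 then 2 else 3) = 0 := by
            split_ifs <;> omega
          rw [this]
          push_cast
          ring
    rw [Finset.sum_congr rfl hpt, Finset.sum_add_distrib,
        Finset.sum_ite_eq' _ t (fun j => (j:ℤ)^2),
        Finset.sum_ite_eq' _ (2*t+1) (fun j => (j:ℤ)^2),
        if_pos (Finset.mem_Icc.2 (by omega)), if_pos (Finset.mem_Icc.2 (by omega))]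
    push_cast
    ring
end

section
/- Let a and b be relatively prime positive integers and let l = a mod b with 1 < l < b. Then (b² + 1)(a−1)(2a−1)/(6a²) − (a−1)·b/(2a) − (2b/a)·(R(a,b) − R(b,l) + s(1,l)) ≤ M_2(a;b) ≤ (b² + 1)(a−1)(2a−1)/(6a²) − (a−1)·b/(2a) − (2b/a)·(R(a,b) − R(b,l) − s(1,l)), where s(1,l) = l/12 − 1/4 + 1/(6l). -/
/-- The rational function `R(x,y) = −1/4 + (1/12)(x/y + 1/(xy) + y/x)`. -/
def Rfun (x y : ℚ) : ℚ := -1/4 + (1/12) * (x / y + 1 / (x * y) + y / x)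

/-- The second moment `M_2(a;b) = (1/a)·∑_{m=0}^{a−1} ⌊m·b/a⌋²`. -/
def M2 (a b : ℕ) : ℚ := (1 / (a : ℚ)) * ∑ m ∈ Finset.range a, ((m * b / a : ℕ) : ℚ) ^ 2

/-!
Write `s(h,k)` for the Dedekind sum. Substituting `⌊bm/a⌋ = (bm - (bm mod a))/a` and using that
`m ↦ bm mod a` permutes the residues mod `a` expresses `M₂(a;b)` exactly through `s(b,a)`.
Reciprocity `s(b,a) + s(a,b) = R(a,b)`, proved by counting the lattice points below the diagonal
of the `a × b` rectangle in two ways, together with `s(a,b) = s(l,b)` and reciprocity for `(b,l)`,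
gives `s(b,a) = R(a,b) - R(b,l) + s(b,l)`; finally Cauchy–Schwarz bounds `|s(b,l)|` by `s(1,l)`.
-/

open Finset

lemma sum_range_natCast (k : ℕ) : ∑ m ∈ range k, (m : ℚ) = k * (k - 1) / 2 := by
  induction k with
  | zero => simp
  | succ n ih => rw [sum_range_succ, ih]; push_cast; ring

lemma sum_range_natCast_sq (k : ℕ) :
    ∑ m ∈ range k, (m : ℚ) ^ 2 = k * (k - 1) * (2 * k - 1) / 6 := by
  induction k with
  | zero => simp
  | succ n ih => rw [sum_range_succ, ih]; push_cast; ring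

lemma sum_range_comp_mul_mod {M : Type*} [AddCommMonoid M] {h k : ℕ} (hco : h.Coprime k)
    (g : ℕ → M) : ∑ m ∈ range k, g (h * m % k) = ∑ m ∈ range k, g m := by
  have hmaps : Set.MapsTo (fun m => h * m % k) (range k) (range k) := fun m hm =>
    mem_range.2 (Nat.mod_lt _ (Nat.zero_lt_of_lt (mem_range.1 hm)))
  have hinj : Set.InjOn (fun m => h * m % k) (range k) := fun m hm n hn hmn =>
    (Nat.ModEq.cancel_left_of_coprime hco.symm hmn).eq_of_lt_of_lt (mem_range.1 hm)
      (mem_range.1 hn)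
  exact sum_nbij _ hmaps hinj (surjOn_of_injOn_of_card_le _ hmaps hinj le_rfl) fun _ _ => rfl

lemma natCast_mul_mod (h k m : ℕ) :
    ((h * m % k : ℕ) : ℚ) = h * m - k * ((h * m / k : ℕ) : ℚ) := by
  have := Nat.div_add_mod (h * m) k
  rw [eq_sub_iff_add_eq, add_comm]
  exact_mod_cast this

lemma sum_range_mul_div {h k : ℕ} (hco : h.Coprime k) :
    ∑ m ∈ range k, ((h * m / k : ℕ) : ℚ) = (h - 1) * (k - 1) / 2 := by
  rcases Nat.eq_zero_or_pos k with rfl | hk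
  · simp [(Nat.coprime_zero_right h).1 hco]
  have hsum : ∑ m ∈ range k, ((h * m % k : ℕ) : ℚ)
      = ∑ m ∈ range k, ((h : ℚ) * m - k * ((h * m / k : ℕ) : ℚ)) :=
    sum_congr rfl fun m _ => natCast_mul_mod h k m
  rw [sum_range_comp_mul_mod hco (fun n => (n : ℚ)), sum_sub_distrib, ← mul_sum, ← mul_sum,
    sum_range_natCast] at hsum
  have hk' : (k : ℚ) ≠ 0 := by positivity
  apply mul_left_cancel₀ hk'
  linear_combination hsum

lemma sum_range_mul_mul_mod (h k : ℕ) :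
    ∑ m ∈ range k, (m : ℚ) * ((h * m % k : ℕ) : ℚ)
      = h * ∑ m ∈ range k, (m : ℚ) ^ 2
        - k * ∑ m ∈ range k, (m : ℚ) * ((h * m / k : ℕ) : ℚ) := by
  simp only [natCast_mul_mod, mul_sum, ← sum_sub_distrib]
  exact sum_congr rfl fun m _ => by ring

lemma sq_mul_sum_range_mul_div_sq {h k : ℕ} (hco : h.Coprime k) :
    (k : ℚ) ^ 2 * ∑ m ∈ range k, ((h * m / k : ℕ) : ℚ) ^ 2
      = (h ^ 2 + 1) * ∑ m ∈ range k, (m : ℚ) ^ 2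
        - 2 * h * ∑ m ∈ range k, (m : ℚ) * ((h * m % k : ℕ) : ℚ) := by
  have hterm : ∀ m ∈ range k, (k : ℚ) ^ 2 * ((h * m / k : ℕ) : ℚ) ^ 2
      = h ^ 2 * (m : ℚ) ^ 2 - 2 * h * ((m : ℚ) * ((h * m % k : ℕ) : ℚ))
        + ((h * m % k : ℕ) : ℚ) ^ 2 := fun m _ => by
    rw [natCast_mul_mod]; ring
  rw [mul_sum, sum_congr rfl hterm, sum_add_distrib, sum_sub_distrib, ← mul_sum, ← mul_sum,
    sum_range_comp_mul_mod hco (fun n => (n : ℚ) ^ 2)]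
  ring

/-- Both sides sum `μ` over the lattice points `(μ, ν) ∈ [0, k) × [0, h)` with `k ν < h μ`,
by rows and by columns; coprimality rules out lattice points on the diagonal except the origin. -/
lemma sum_range_mul_div_add_one {h k : ℕ} (hco : h.Coprime k) :
    ∑ μ ∈ range k, μ * (h * μ / k + 1)
      = ∑ ν ∈ range h, ∑ μ ∈ Ico (k * ν / h + 1) k, μ := by
  rcases Nat.eq_zero_or_pos h with rfl | hh
  · simp [(Nat.coprime_zero_left k).1 hco]
  have hrow : ∀ μ ∈ range k, μ * (h * μ / k + 1)
      = ∑ ν ∈ range h, if k * ν < h * μ then μ else 0 := by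
    intro μ hμ
    have hk : 0 < k := Nat.zero_lt_of_lt (mem_range.1 hμ)
    have hfilter : (range h).filter (fun ν => k * ν ≤ h * μ) = range (h * μ / k + 1) := by
      ext ν
      simp only [mem_filter, mem_range, Nat.lt_succ_iff, Nat.le_div_iff_mul_le hk, mul_comm ν k]
      refine ⟨And.right, fun hν => ⟨?_, hν⟩⟩
      nlinarith [mem_range.1 hμ, Nat.mul_le_mul_left k hν]
    have hdiag : ∀ ν ∈ range h, (if k * ν < h * μ then μ else 0)
        = if k * ν ≤ h * μ then μ else 0 := by
      intro ν _
      by_cases heq : k * ν = h * μ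
      · have : k ∣ μ := hco.symm.dvd_of_dvd_mul_left ⟨ν, heq.symm⟩
        simp [Nat.eq_zero_of_dvd_of_lt this (mem_range.1 hμ)]
      · simp only [lt_iff_le_and_ne, heq, ne_eq, not_false_eq_true, and_true]
    rw [sum_congr rfl hdiag, ← sum_filter, hfilter, sum_const, card_range, smul_eq_mul, mul_comm]
  have hcol : ∀ ν ∈ range h, (∑ μ ∈ range k, if k * ν < h * μ then μ else 0)
      = ∑ μ ∈ Ico (k * ν / h + 1) k, μ := by
    intro ν _
    rw [← sum_filter]
    congr 1
    ext μ
    simp only [mem_filter, mem_range, mem_Ico, Nat.succ_le_iff, Nat.div_lt_iff_lt_mul hh,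
      mul_comm μ h]
    exact and_comm
  rw [sum_congr rfl hrow, sum_comm, sum_congr rfl hcol]

lemma sum_range_mul_mul_div {h k : ℕ} (hco : h.Coprime k) :
    ∑ μ ∈ range k, (μ : ℚ) * ((h * μ / k : ℕ) : ℚ)
      = (h - 1) * (k * (k - 1) / 2) - (∑ ν ∈ range h, ((k * ν / h : ℕ) : ℚ) ^ 2) / 2
        - (h - 1) * (k - 1) / 4 := by
  rcases Nat.eq_zero_or_pos k with rfl | hk
  · simp [(Nat.coprime_zero_right h).1 hco]
  have hcount := congrArg (Nat.cast : ℕ → ℚ) (sum_range_mul_div_add_one hco)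
  have hcol : ∀ ν ∈ range h, ((∑ μ ∈ Ico (k * ν / h + 1) k, μ : ℕ) : ℚ)
      = k * (k - 1) / 2 - (((k * ν / h : ℕ) : ℚ) ^ 2 + ((k * ν / h : ℕ) : ℚ)) / 2 := by
    intro ν hν
    have hlt : k * ν / h < k := Nat.div_lt_of_lt_mul <| by
      rw [mul_comm h]; exact Nat.mul_lt_mul_of_pos_left (mem_range.1 hν) hk
    rw [Nat.cast_sum, sum_Ico_eq_sub _ hlt, sum_range_natCast, sum_range_natCast]
    push_cast
    ring
  rw [Nat.cast_sum, Nat.cast_sum, sum_congr rfl hcol] at hcount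
  push_cast at hcount
  rw [sum_sub_distrib, sum_const, card_range, nsmul_eq_mul, ← sum_div, sum_add_distrib,
    sum_range_mul_div hco.symm] at hcount
  simp only [mul_add, mul_one, sum_add_distrib, sum_range_natCast] at hcount
  linear_combination hcount

def sawtooth (x : ℚ) : ℚ := if Int.fract x = 0 then 0 else Int.fract x - 1 / 2

def dedekindSum (h k : ℕ) : ℚ := ∑ m ∈ range k, sawtooth (h * m / k) * sawtooth (m / k)

lemma sawtooth_natCast_div (n k : ℕ) : sawtooth (n / k) = sawtooth ((n % k : ℕ) / k) := by
  simp only [sawtooth, Int.fract_div_natCast_eq_div_natCast_mod, Nat.mod_mod]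

lemma sawtooth_natCast_div_of_not_dvd {n k : ℕ} (hk : 0 < k) (hn : ¬k ∣ n) :
    sawtooth (n / k) = (n % k : ℕ) / k - 1 / 2 := by
  have hmod : ((n % k : ℕ) : ℚ) ≠ 0 :=
    Nat.cast_ne_zero.2 fun h => hn (Nat.dvd_of_mod_eq_zero h)
  have hk' : (k : ℚ) ≠ 0 := by positivity
  simp [sawtooth, Int.fract_div_natCast_eq_div_natCast_mod, hmod, hk']

lemma dedekindSum_eq_sum_mul_mod {h k : ℕ} (hk : 0 < k) (hco : h.Coprime k) :
    dedekindSum h k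
      = (∑ m ∈ range k, (m : ℚ) * ((h * m % k : ℕ) : ℚ)) / k ^ 2 - (k - 1) / 4 := by
  -- `((0)) = 0`, whereas the expansion of `((hm/k))((m/k))` for `0 < m < k` gives `1/4` at `m = 0`.
  have hterm : ∀ m ∈ range k, sawtooth (h * m / k) * sawtooth (m / k)
      = (m : ℚ) * ((h * m % k : ℕ) : ℚ) / k ^ 2 - (((h * m % k : ℕ) : ℚ) + m) / (2 * k)
        + 1 / 4 - if m = 0 then 1 / 4 else 0 := by
    intro m hm
    rcases Nat.eq_zero_or_pos m with rfl | hm0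
    · norm_num [sawtooth]
    have hdvd : ¬k ∣ m := Nat.not_dvd_of_pos_of_lt hm0 (mem_range.1 hm)
    have hdvd' : ¬k ∣ h * m := fun hkm => hdvd (hco.symm.dvd_of_dvd_mul_left hkm)
    rw [← Nat.cast_mul, sawtooth_natCast_div_of_not_dvd hk hdvd',
      sawtooth_natCast_div_of_not_dvd hk hdvd, Nat.mod_eq_of_lt (mem_range.1 hm), if_neg hm0.ne']
    field_simp
    ring
  have hk' : (k : ℚ) ≠ 0 := by positivity
  rw [dedekindSum, sum_congr rfl hterm, sum_sub_distrib, sum_ite_eq' _ _ (fun _ => (1 : ℚ) / 4),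
    if_pos (mem_range.2 hk), sum_add_distrib, sum_sub_distrib, ← sum_div, ← sum_div,
    sum_add_distrib, sum_range_comp_mul_mod hco (fun n => (n : ℚ)), sum_range_natCast, sum_const,
    card_range, nsmul_eq_mul]
  field_simp
  ring

lemma dedekindSum_mod (h k : ℕ) : dedekindSum (h % k) k = dedekindSum h k := by
  refine sum_congr rfl fun m _ => ?_
  rw [← Nat.cast_mul, ← Nat.cast_mul, sawtooth_natCast_div, sawtooth_natCast_div (h * m),
    Nat.mod_mul_mod]

lemma dedekindSum_one {k : ℕ} (hk : 0 < k) :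
    dedekindSum 1 k = k / 12 - 1 / 4 + 1 / (6 * k) := by
  have hsq : ∀ m ∈ range k, (m : ℚ) * ((1 * m % k : ℕ) : ℚ) = (m : ℚ) ^ 2 := by
    intro m hm
    rw [one_mul, Nat.mod_eq_of_lt (mem_range.1 hm), sq]
  have hk' : (k : ℚ) ≠ 0 := by positivity
  rw [dedekindSum_eq_sum_mul_mod hk (Nat.coprime_one_left k), sum_congr rfl hsq,
    sum_range_natCast_sq]
  field_simp
  ring

lemma abs_dedekindSum_le {h k : ℕ} (hco : h.Coprime k) :
    |dedekindSum h k| ≤ dedekindSum 1 k := by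
  have hone : dedekindSum 1 k = ∑ m ∈ range k, sawtooth (m / k) ^ 2 := by
    simp only [dedekindSum, Nat.cast_one, one_mul, sq]
  have hperm :
      ∑ m ∈ range k, sawtooth (h * m / k) ^ 2 = ∑ m ∈ range k, sawtooth (m / k) ^ 2 := by
    simp only [← Nat.cast_mul, sawtooth_natCast_div (h * _)]
    exact sum_range_comp_mul_mod hco fun n => sawtooth (n / k) ^ 2
  refine abs_le_of_sq_le_sq ?_ (hone ▸ sum_nonneg fun _ _ => sq_nonneg _)
  calc dedekindSum h k ^ 2
      ≤ (∑ m ∈ range k, sawtooth (h * m / k) ^ 2) * ∑ m ∈ range k, sawtooth (m / k) ^ 2 :=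
        sum_mul_sq_le_sq_mul_sq _ _ _
    _ = dedekindSum 1 k ^ 2 := by rw [hperm, ← hone, sq]

theorem dedekindSum_add_dedekindSum {h k : ℕ} (hh : 0 < h) (hk : 0 < k) (hco : h.Coprime k) :
    dedekindSum h k + dedekindSum k h = Rfun h k := by
  have hh' : (h : ℚ) ≠ 0 := by positivity
  have hk' : (k : ℚ) ≠ 0 := by positivity
  have hQ := eq_div_of_mul_eq (pow_ne_zero 2 hh')
    ((mul_comm _ _).trans (sq_mul_sum_range_mul_div_sq hco.symm))
  rw [dedekindSum_eq_sum_mul_mod hk hco, dedekindSum_eq_sum_mul_mod hh hco.symm,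
    sum_range_mul_mul_mod h k, sum_range_mul_mul_div hco, hQ, sum_range_natCast_sq,
    sum_range_natCast_sq, Rfun]
  field_simp
  ring

lemma M2_eq_dedekindSum {a b : ℕ} (ha : 0 < a) (hco : b.Coprime a) :
    M2 a b = ((b : ℚ) ^ 2 + 1) * ((a : ℚ) - 1) * (2 * (a : ℚ) - 1) / (6 * (a : ℚ) ^ 2)
      - ((a : ℚ) - 1) * (b : ℚ) / (2 * a) - (2 * (b : ℚ) / a) * dedekindSum b a := by
  have ha' : (a : ℚ) ≠ 0 := by positivity
  have hQ := eq_div_of_mul_eq (pow_ne_zero 2 ha')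
    ((mul_comm _ _).trans (sq_mul_sum_range_mul_div_sq hco))
  simp only [M2, mul_comm _ b]
  rw [hQ, dedekindSum_eq_sum_mul_mod ha hco, sum_range_natCast_sq]
  field_simp
  ring

theorem M2_reciprocity_bounds_general (a b : ℕ) (ha : 0 < a) (hb : 0 < b)
    (hab : Nat.Coprime a b) (l : ℕ) (hl : l = a % b) (h1 : 1 < l) :
    ((b : ℚ) ^ 2 + 1) * ((a : ℚ) - 1) * (2 * (a : ℚ) - 1) / (6 * (a : ℚ) ^ 2)
        - ((a : ℚ) - 1) * (b : ℚ) / (2 * a)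
        - (2 * (b : ℚ) / a) * (Rfun a b - Rfun b l + ((l : ℚ) / 12 - 1/4 + 1 / (6 * l)))
      ≤ M2 a b
    ∧ M2 a b
      ≤ ((b : ℚ) ^ 2 + 1) * ((a : ℚ) - 1) * (2 * (a : ℚ) - 1) / (6 * (a : ℚ) ^ 2)
        - ((a : ℚ) - 1) * (b : ℚ) / (2 * a)
        - (2 * (b : ℚ) / a) * (Rfun a b - Rfun b l - ((l : ℚ) / 12 - 1/4 + 1 / (6 * l))) := by
  have hl0 : 0 < l := by omega
  have hbl : b.Coprime l := by rw [hl, Nat.Coprime, Nat.gcd_comm, ← Nat.gcd_rec]; exact hab.symm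
  have hreduce : dedekindSum b a = Rfun a b - Rfun b l + dedekindSum b l := by
    have hab_rec := dedekindSum_add_dedekindSum ha hb hab
    have hbl_rec := dedekindSum_add_dedekindSum hb hl0 hbl
    rw [← dedekindSum_mod, ← hl] at hab_rec
    linarith
  obtain ⟨hlower, hupper⟩ := abs_le.1 (abs_dedekindSum_le hbl)
  rw [dedekindSum_one hl0] at hlower hupper
  rw [M2_eq_dedekindSum ha hab.symm, hreduce]
  constructor
  · gcongr
  · gcongr
    linarith

/-- here `s(1,l) = l/12 − 1/4 + 1/(6l)`. -/
theorem M2_reciprocity_bounds (a b : ℕ) (ha : 0 < a) (hb : 0 < b)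
    (hab : Nat.Coprime a b) (l : ℕ) (hl : l = a % b) (h1 : 1 < l) (h2 : l < b) :
    ((b : ℚ) ^ 2 + 1) * ((a : ℚ) - 1) * (2 * (a : ℚ) - 1) / (6 * (a : ℚ) ^ 2)
        - ((a : ℚ) - 1) * (b : ℚ) / (2 * a)
        - (2 * (b : ℚ) / a) * (Rfun a b - Rfun b l + ((l : ℚ) / 12 - 1/4 + 1 / (6 * l)))
      ≤ M2 a b
    ∧ M2 a b
      ≤ ((b : ℚ) ^ 2 + 1) * ((a : ℚ) - 1) * (2 * (a : ℚ) - 1) / (6 * (a : ℚ) ^ 2)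
        - ((a : ℚ) - 1) * (b : ℚ) / (2 * a)
        - (2 * (b : ℚ) / a) * (Rfun a b - Rfun b l - ((l : ℚ) / 12 - 1/4 + 1 / (6 * l))) :=
  M2_reciprocity_bounds_general a b ha hb hab l hl h1
end
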